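/- Let q_1, ..., q_N be distinct complex numbers, none equal to 0 or 1, and W(z) = z(z-1)∏_{j=1}^N(z - z_j) with distinct z_j ∉ {0,1,q_1,...,q_N}, and Θ(z) = Θ_∞∏_{s=1}^N(z - q_s), Θ_∞ ≠ 0. Then for each r: ∑_{s ≠ r} W(q_s)/(q_s(q_s-1)Θ'(q_s)·(q_r - q_s)) = -1/Θ_∞ + [W(q_r)/(q_r(q_r-1)Θ'(q_r))]·[W'(q_r)/W(q_r) - Θ''(q_r)/(2Θ'(q_r)) - (2q_r - 1)/(q_r(q_r - 1))]. -/

import Mathlib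

/-!
With `P = ∏ (X - z_j)` and `Q = ∏ (X - q_s)` we have `W = X (X - 1) P` and `Θ = Θ∞ Q`. As `P` and `Q`
are monic of the same degree, `P - Q` has degree `< N`, so it is its own Lagrange interpolant at
the nodes `q_s`: `P = Q + ∑_s c_s Q / (X - q_s)` with `c_s = P(q_s) / Q'(q_s)`. Differentiating at
`q_r`, the derivative of `Q / (X - q_s)` there is `Q'(q_r) / (q_r - q_s)` for `s ≠ r` and
`Q''(q_r) / 2` for `s = r`; dividing by `Θ∞ Q'(q_r)` gives the identity.
-/

open Polynomial Finset

theorem Polynomial.eval_derivative_X_mul_X_sub_one_mul {R : Type*} [CommRing R] (P : R[X])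
    (x : R) :
    eval x (derivative (X * (X - 1) * P)) =
      (2 * x - 1) * P.eval x + x * (x - 1) * eval x (derivative P) := by
  simp only [derivative_mul, derivative_X, derivative_sub, derivative_one, eval_add, eval_mul,
    eval_sub, eval_X, eval_one, one_mul, sub_zero]
  ring

namespace Lagrange

section CommRing

variable {R : Type*} [CommRing R] {ι : Type*} [DecidableEq ι] {s : Finset ι} {v : ι → R}

theorem eval_derivative_nodal_erase_mul_sub {i k : ι} (hi : i ∈ s) (hk : k ∈ s) (hik : i ≠ k) :
    eval (v k) (derivative (nodal (s.erase i) v)) * (v k - v i) =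
      eval (v k) (derivative (nodal s v)) := by
  rw [eval_nodal_derivative_eval_node_eq (mem_erase.mpr ⟨hik.symm, hk⟩),
    eval_nodal_derivative_eval_node_eq hk, nodal_eq_mul_nodal_erase (mem_erase.mpr ⟨hik, hi⟩),
    erase_right_comm, eval_mul, eval_sub, eval_X, eval_C, mul_comm]

theorem eval_derivative_derivative_nodal_at_node {k : ι} (hk : k ∈ s) :
    eval (v k) (derivative (derivative (nodal s v))) =
      2 * eval (v k) (derivative (nodal (s.erase k) v)) := by
  rw [nodal_eq_mul_nodal_erase hk, derivative_mul, derivative_X_sub_C, one_mul, derivative_add,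
    derivative_mul, derivative_X_sub_C, one_mul]
  simp only [eval_add, eval_mul, eval_sub, eval_X, eval_C, sub_self, zero_mul, add_zero, two_mul]

theorem eval_derivative_nodal_at_node_ne_zero [Nontrivial R] [NoZeroDivisors R]
    (hvs : Set.InjOn v s) {k : ι} (hk : k ∈ s) :
    eval (v k) (derivative (nodal s v)) ≠ 0 := by
  rw [eval_nodal_derivative_eval_node_eq hk]
  refine eval_nodal_not_at_node fun i hi => ?_
  obtain ⟨hik, hi⟩ := mem_erase.mp hi
  exact fun h => hik (hvs hi hk h.symm)

end CommRing

section Field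

variable {F : Type*} [Field F] {ι : Type*} [DecidableEq ι] {s : Finset ι} {v : ι → F}

theorem eval_derivative_at_node_of_degree_lt (hvs : Set.InjOn v s) {f : F[X]}
    (hf : f.degree < #s) {k : ι} (hk : k ∈ s) :
    eval (v k) (derivative f) =
      eval (v k) (derivative (nodal s v)) * ∑ i ∈ s.erase k,
          f.eval (v i) / (eval (v i) (derivative (nodal s v)) * (v k - v i)) +
        f.eval (v k) * eval (v k) (derivative (nodal (s.erase k) v)) /
          eval (v k) (derivative (nodal s v)) := by
  have hterm : ∀ i ∈ s, eval (v k) (derivative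
      (C (f.eval (v i) / ∏ j ∈ s.erase i, (v i - v j)) * ∏ j ∈ s.erase i, (X - C (v j)))) =
      f.eval (v i) * eval (v k) (derivative (nodal (s.erase i) v)) /
        eval (v i) (derivative (nodal s v)) := by
    intro i hi
    rw [derivative_C_mul, eval_mul, eval_C, eval_nodal_derivative_eval_node_eq hi, eval_nodal,
      ← nodal_eq, div_mul_eq_mul_div]
  conv_lhs => rw [eq_interpolate hvs hf, interpolate_eq_sum]
  rw [derivative_sum, eval_finsetSum, sum_congr rfl hterm, ← add_sum_erase _ _ hk, add_comm,
    mul_sum]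
  congr 1
  refine sum_congr rfl fun i hi => ?_
  obtain ⟨hik, hi⟩ := mem_erase.mp hi
  rw [← eval_derivative_nodal_erase_mul_sub hi hk hik]
  have : v k - v i ≠ 0 := sub_ne_zero.mpr fun h => hik (hvs hi hk h.symm)
  field_simp

theorem sum_eval_div_derivative_nodal_mul_sub (hvs : Set.InjOn v s) (h2 : (2 : F) ≠ 0)
    {P : F[X]} (hP : P.Monic) (hdeg : P.natDegree = #s) {k : ι} (hk : k ∈ s) :
    ∑ i ∈ s.erase k, P.eval (v i) / (eval (v i) (derivative (nodal s v)) * (v k - v i)) =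
      -1 + eval (v k) (derivative P) / eval (v k) (derivative (nodal s v)) -
        P.eval (v k) * eval (v k) (derivative (derivative (nodal s v))) /
          (2 * eval (v k) (derivative (nodal s v)) ^ 2) := by
  have hdeg_sub : (P - nodal s v).degree < #s := by
    have := degree_sub_lt_left (q := nodal s v)
      (by rw [degree_nodal, degree_eq_natDegree hP.ne_zero, hdeg]) hP.ne_zero
      (by rw [hP.leadingCoeff, nodal_monic.leadingCoeff])
    rwa [degree_eq_natDegree hP.ne_zero, hdeg] at this
  have hsub_eval : ∀ i ∈ s, (P - nodal s v).eval (v i) = P.eval (v i) := fun i hi => by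
    rw [eval_sub, eval_nodal_at_node hi, sub_zero]
  have key := eval_derivative_at_node_of_degree_lt hvs hdeg_sub hk
  rw [derivative_sub, eval_sub, hsub_eval k hk, sum_congr rfl fun i hi =>
    by rw [hsub_eval i (mem_of_mem_erase hi)]] at key
  rw [eval_derivative_derivative_nodal_at_node hk]
  have := eval_derivative_nodal_at_node_ne_zero hvs hk
  generalize ∑ i ∈ s.erase k, P.eval (v i) / (eval (v i) (derivative (nodal s v)) * (v k - v i)) =
    S at key ⊢
  linear_combination (norm := (field_simp; ring)) -key / eval (v k) (derivative (nodal s v))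

end Field

end Lagrange

open Lagrange in
theorem stmt_11_general (N : ℕ) (z q : Fin N → ℂ)
    (hq : Function.Injective q)
    (hq0 : ∀ r, q r ≠ 0) (hq1 : ∀ r, q r ≠ 1)
    (hqz : ∀ r j, q r ≠ z j)
    (Θinf : ℂ) (hΘinf : Θinf ≠ 0)
    (W Θ : Polynomial ℂ)
    (hW : W = X * (X - 1) * ∏ j, (X - C (z j)))
    (hΘ : Θ = C Θinf * ∏ s, (X - C (q s)))
    (r : Fin N) :
    ∑ s ∈ Finset.univ.erase r,
        W.eval (q s) / (q s * (q s - 1) * (derivative Θ).eval (q s) * (q r - q s)) =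
      -1 / Θinf +
        W.eval (q r) / (q r * (q r - 1) * (derivative Θ).eval (q r)) *
          ((derivative W).eval (q r) / W.eval (q r) -
            (derivative (derivative Θ)).eval (q r) / (2 * (derivative Θ).eval (q r)) -
            (2 * q r - 1) / (q r * (q r - 1))) := by
  rw [← nodal_eq] at hW hΘ
  subst hW hΘ
  have hvs : Set.InjOn q (univ : Finset (Fin N)) := hq.injOn
  have key := sum_eval_div_derivative_nodal_mul_sub hvs two_ne_zero (nodal_monic (v := z))
    natDegree_nodal (mem_univ r)
  have hQ' : ∀ s, eval (q s) (derivative (nodal univ q)) ≠ 0 := fun s =>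
    eval_derivative_nodal_at_node_ne_zero hvs (mem_univ s)
  have hP : (nodal univ z).eval (q r) ≠ 0 := eval_nodal_not_at_node fun j _ => hqz r j
  generalize nodal univ z = P at key hP ⊢
  generalize nodal univ q = Q at key hQ' ⊢
  simp only [eval_derivative_X_mul_X_sub_one_mul, derivative_C_mul, eval_mul, eval_C, eval_sub,
    eval_X, eval_one]
  have hterm : ∀ s ∈ univ.erase r,
      q s * (q s - 1) * P.eval (q s) /
          (q s * (q s - 1) * (Θinf * eval (q s) (derivative Q)) * (q r - q s)) =
        Θinf⁻¹ * (P.eval (q s) / (eval (q s) (derivative Q) * (q r - q s))) := fun s hs => by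
    have h0 := hq0 s
    have h1 : q s - 1 ≠ 0 := sub_ne_zero.mpr (hq1 s)
    have hrs : q r - q s ≠ 0 := sub_ne_zero.mpr fun h => (mem_erase.mp hs).1 (hq h).symm
    have := hQ' s
    field_simp
  rw [sum_congr rfl hterm, ← mul_sum, key]
  have h0 := hq0 r
  have h1 : q r - 1 ≠ 0 := sub_ne_zero.mpr (hq1 r)
  have := hQ' r
  field_simp
  ring

/-- Identity (Tsum:g): with `W = z(z-1)∏(z - z_j)` and `Θ = Θ∞ ∏ (z - q_s)` in generic
configuration, for each `r`:
`∑_{s ≠ r} W(q s)/(q s (q s - 1) Θ'(q s) (q r - q s)) = -1/Θ∞ +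
  (W(q r)/(q r (q r - 1) Θ'(q r)))·(W'(q r)/W(q r) - Θ''(q r)/(2Θ'(q r)) - (2 q r - 1)/(q r (q r - 1)))`. -/
theorem stmt_11 (N : ℕ) (z q : Fin N → ℂ)
    (hz : Function.Injective z) (hq : Function.Injective q)
    (hz0 : ∀ j, z j ≠ 0) (hz1 : ∀ j, z j ≠ 1)
    (hq0 : ∀ r, q r ≠ 0) (hq1 : ∀ r, q r ≠ 1)
    (hqz : ∀ r j, q r ≠ z j)
    (Θinf : ℂ) (hΘinf : Θinf ≠ 0)
    (W Θ : Polynomial ℂ)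
    (hW : W = X * (X - 1) * ∏ j, (X - C (z j)))
    (hΘ : Θ = C Θinf * ∏ s, (X - C (q s)))
    (r : Fin N) :
    ∑ s ∈ Finset.univ.erase r,
        W.eval (q s) / (q s * (q s - 1) * (derivative Θ).eval (q s) * (q r - q s)) =
      -1 / Θinf +
        W.eval (q r) / (q r * (q r - 1) * (derivative Θ).eval (q r)) *
          ((derivative W).eval (q r) / W.eval (q r) -
            (derivative (derivative Θ)).eval (q r) / (2 * (derivative Θ).eval (q r)) -
            (2 * q r - 1) / (q r * (q r - 1))) :=
  stmt_11_general N z q hq hq0 hq1 hqz Θinf hΘinf W Θ hW hΘ r
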